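/- arXiv:1507.06093 — 5 statements merged into one kernel-verified Lean document; each statement's English description precedes it below -/
import Mathlib

section
/- Suppose for each pair s ≤ t of reals, μ_{s,t} is a probability measure on H with ∫_H |⟨a,y⟩| dμ_{s,t}(y) < ∞ and ∫_H ⟨a,y⟩ dμ_{s,t}(y) = 0 for all a ∈ H, and define π_{s,t}(x,·) as the pushforward of μ_{s,t} under y ↦ y + U_{s,t}x. Let (ν_t)_{t∈ℝ} be a π-entrance law such that for every t, ∫_H |⟨a,x⟩| dν_t(x) < ∞ for all a ∈ H, and let κ_t ∈ H be the mean of ν_t, i.e. ∫_H ⟨a,x⟩ dν_t(x) = ⟨a,κ_t⟩ for all a ∈ H. Then U_{s,t} κ_s = κ_t for all s ≤ t. -/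
open MeasureTheory
open scoped RealInnerProductSpace

/-- `ν` is an entrance law for the transition kernels
`π_{s,t}(x, ·) = (μ s t).map (fun y => y + U s t x)`. -/
def IsEntranceLaw {H : Type*} [NormedAddCommGroup H] [InnerProductSpace ℝ H]
    [MeasurableSpace H] (U : ℝ → ℝ → H →L[ℝ] H) (μ : ℝ → ℝ → Measure H)
    (ν : ℝ → Measure H) : Prop :=
  (∀ t : ℝ, IsProbabilityMeasure (ν t)) ∧
    ∀ s t : ℝ, s ≤ t → ∀ B : Set H, MeasurableSet B →
      ν t B = ∫⁻ x, ((μ s t).map (fun y => y + U s t x)) B ∂(ν s)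

theorem stmt5
    {H : Type*} [NormedAddCommGroup H] [InnerProductSpace ℝ H] [CompleteSpace H]
    [TopologicalSpace.SeparableSpace H] [MeasurableSpace H] [BorelSpace H]
    (U : ℝ → ℝ → H →L[ℝ] H)
    (hU_id : ∀ t : ℝ, U t t = ContinuousLinearMap.id ℝ H)
    (hU_comp : ∀ s r t : ℝ, s ≤ r → r ≤ t → (U r t).comp (U s r) = U s t)
    (μ : ℝ → ℝ → Measure H)
    (hμprob : ∀ s t : ℝ, s ≤ t → IsProbabilityMeasure (μ s t))
    (hμint : ∀ s t : ℝ, s ≤ t → ∀ a : H, Integrable (fun y => ⟪a, y⟫) (μ s t))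
    (hμzero : ∀ s t : ℝ, s ≤ t → ∀ a : H, ∫ y, ⟪a, y⟫ ∂(μ s t) = 0)
    (ν : ℝ → Measure H) (hν : IsEntranceLaw U μ ν)
    (hν1 : ∀ (t : ℝ) (a : H), Integrable (fun x => ⟪a, x⟫) (ν t))
    (κ : ℝ → H)
    (hκ : ∀ (t : ℝ) (a : H), ∫ x, ⟪a, x⟫ ∂(ν t) = ⟪a, κ t⟫) :
    ∀ s t : ℝ, s ≤ t → U s t (κ s) = κ t := by
  intro s t hst
  haveI := hν.1 s
  haveI := hν.1 t
  haveI := hμprob s t hst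
  set F : H × H → H := fun z => z.2 + U s t z.1 with hF
  have hFmeas : Measurable F :=
    measurable_snd.add ((U s t).continuous.measurable.comp measurable_fst)
  -- ν t is the pushforward of the product measure under F
  have hmap : ν t = ((ν s).prod (μ s t)).map F := by
    ext B hB
    rw [Measure.map_apply hFmeas hB, hν.2 s t hst B hB,
      Measure.prod_apply (hFmeas hB)]
    refine lintegral_congr fun x => ?_
    rw [Measure.map_apply (by fun_prop) hB]
    rfl
  have hsnd : Measure.map Prod.snd ((ν s).prod (μ s t)) = μ s t := by
    simp [Measure.map_snd_prod]
  have hfst : Measure.map Prod.fst ((ν s).prod (μ s t)) = ν s := by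
    simp [Measure.map_fst_prod]
  -- compute the mean of ν t
  refine (ext_inner_left ℝ fun a => ?_).symm
  have h1 : ⟪a, κ t⟫ = ∫ z, ⟪a, F z⟫ ∂((ν s).prod (μ s t)) := by
    rw [← hκ t a, hmap,
      integral_map hFmeas.aemeasurable
        (by rw [← hmap]; exact (hν1 t a).aestronglyMeasurable)]
  have hUi : Integrable (fun x : H => ⟪a, U s t x⟫) (ν s) := by
    simpa [ContinuousLinearMap.adjoint_inner_left] using hν1 s ((U s t).adjoint a)
  have hint2 : Integrable (fun z : H × H => ⟪a, z.2⟫) ((ν s).prod (μ s t)) := by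
    have h := hμint s t hst a
    rw [← hsnd] at h
    exact (integrable_map_measure h.aestronglyMeasurable
      measurable_snd.aemeasurable).mp h
  have hint1 : Integrable (fun z : H × H => ⟪a, U s t z.1⟫) ((ν s).prod (μ s t)) := by
    have h := hUi
    rw [← hfst] at h
    exact (integrable_map_measure h.aestronglyMeasurable
      measurable_fst.aemeasurable).mp h
  have h2 : ∫ z, ⟪a, F z⟫ ∂((ν s).prod (μ s t))
      = (∫ z, ⟪a, (z : H × H).2⟫ ∂((ν s).prod (μ s t)))
        + ∫ z, ⟪a, U s t (z : H × H).1⟫ ∂((ν s).prod (μ s t)) := by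
    rw [← integral_add hint2 hint1]
    congr 1
    ext z
    simp [hF, inner_add_right]
  have h3 : ∫ z, ⟪a, (z : H × H).2⟫ ∂((ν s).prod (μ s t)) = 0 := by
    rw [show ∫ z, ⟪a, (z : H × H).2⟫ ∂((ν s).prod (μ s t))
        = ∫ y, ⟪a, y⟫ ∂(Measure.map Prod.snd ((ν s).prod (μ s t))) from
      (integral_map measurable_snd.aemeasurable
        (by rw [hsnd]; exact (hμint s t hst a).aestronglyMeasurable)).symm,
      hsnd, hμzero s t hst a]
  have h4 : ∫ z, ⟪a, U s t (z : H × H).1⟫ ∂((ν s).prod (μ s t)) = ⟪a, U s t (κ s)⟫ := by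
    rw [show ∫ z, ⟪a, U s t (z : H × H).1⟫ ∂((ν s).prod (μ s t))
        = ∫ x, ⟪a, U s t x⟫ ∂(Measure.map Prod.fst ((ν s).prod (μ s t))) from
      (integral_map measurable_fst.aemeasurable
        (by rw [hfst]; exact hUi.aestronglyMeasurable)).symm,
      hfst]
    have : ∫ x, ⟪a, U s t x⟫ ∂(ν s) = ∫ x, ⟪(U s t).adjoint a, x⟫ ∂(ν s) := by
      simp [ContinuousLinearMap.adjoint_inner_left]
    rw [this, hκ s, ContinuousLinearMap.adjoint_inner_left]
  rw [h1, h2, h3, h4, zero_add]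
end

section
/- Suppose for each t ∈ ℝ and each pair s ≤ t, μ_{−∞,t} and μ_{s,t} are probability measures on H satisfying μ_{−∞,t} = (pushforward of μ_{−∞,s} under U_{s,t}) ∗ μ_{s,t} for all s ≤ t, and define π_{s,t}(x,·) as the pushforward of μ_{s,t} under y ↦ y + U_{s,t}x. Let κ : ℝ → H satisfy U_{s,t} κ_s = κ_t for all s ≤ t. Define ν^κ_t as the pushforward of μ_{−∞,t} under y ↦ y + κ_t. Then (ν^κ_t)_{t∈ℝ} is a π-entrance law, and for all t ∈ ℝ and a ∈ H: charFun ν^κ_t (a) = exp(i⟨a,κ_t⟩) · charFun μ_{−∞,t}(a). -/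
/-!
Since `U s t (κ s) = κ t` and translation commutes with convolution,
`ν_t = (μ_{-∞,s} ∘ U_{s,t}⁻¹ ∗ μ_{s,t}) ∘ (· + κ_t)⁻¹ = (ν_s ∘ U_{s,t}⁻¹) ∗ μ_{s,t}`,
and evaluating a convolution `(ν ∘ f⁻¹) ∗ β` on `B` gives `∫ β(B - f x) dν(x)`, which here is
`∫ π_{s,t}(x, B) dν_s(x)`. The formula for the characteristic function is the shift rule for
translated measures.
-/

open MeasureTheory Complex
open scoped RealInnerProductSpace

noncomputable def charFun' {H : Type*} [NormedAddCommGroup H] [InnerProductSpace ℝ H]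
    [MeasurableSpace H] (μ : Measure H) (a : H) : ℂ :=
  ∫ x, Complex.exp ((⟪a, x⟫ : ℂ) * Complex.I) ∂μ

namespace MeasureTheory.Measure

variable {G : Type*} [AddCommMonoid G] [MeasurableSpace G] [MeasurableAdd₂ G]

theorem map_add_const_conv (α β : Measure G) [SFinite β] (c : G) :
    (α ∗ β).map (· + c) = α.map (· + c) ∗ β := by
  refine ext_of_lintegral _ fun f hf ↦ ?_
  rw [lintegral_map hf (by fun_prop), lintegral_conv (by fun_prop), lintegral_conv hf,
    lintegral_map (by fun_prop) (by fun_prop)]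
  simp only [add_right_comm]

theorem map_conv_apply {X : Type*} [MeasurableSpace X] {f : X → G} (hf : Measurable f)
    (ν : Measure X) (β : Measure G) [SFinite β] {B : Set G} (hB : MeasurableSet B) :
    (ν.map f ∗ β) B = ∫⁻ x, β.map (· + f x) B ∂ν := by
  have hB' : MeasurableSet ((fun p : G × G ↦ p.1 + p.2) ⁻¹' B) := measurable_add hB
  rw [conv, map_apply measurable_add hB, prod_apply hB',
    lintegral_map (measurable_measure_prodMk_left hB') hf]
  refine lintegral_congr fun x ↦ ?_
  rw [map_apply (by fun_prop) hB]
  simp only [Set.preimage, Set.mem_ofPred_eq, add_comm]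

end MeasureTheory.Measure

section

variable {H : Type*} [NormedAddCommGroup H] [InnerProductSpace ℝ H] [MeasurableSpace H]

theorem charFun'_eq_charFun (μ : Measure H) (a : H) : charFun' μ a = charFun μ a := by
  simp only [charFun', charFun_apply, real_inner_comm]

theorem charFun'_map_add_const [BorelSpace H] (μ : Measure H) (c a : H) :
    charFun' (μ.map (· + c)) a = Complex.exp ((⟪a, c⟫ : ℂ) * Complex.I) * charFun' μ a := by
  rw [charFun'_eq_charFun, charFun'_eq_charFun, charFun_map_add_const, real_inner_comm, mul_comm]

end

theorem isEntranceLaw_map_add_const {H : Type*} [NormedAddCommGroup H] [InnerProductSpace ℝ H]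
    [MeasurableSpace H] [BorelSpace H] [MeasurableAdd₂ H]
    (U : ℝ → ℝ → H →L[ℝ] H) (μinf : ℝ → Measure H) (μ : ℝ → ℝ → Measure H)
    (hμinf_prob : ∀ t, IsProbabilityMeasure (μinf t))
    (hμprob : ∀ s t, s ≤ t → IsProbabilityMeasure (μ s t))
    (hconv : ∀ s t, s ≤ t → μinf t = (μinf s).map (U s t) ∗ μ s t)
    (κ : ℝ → H) (hκ : ∀ s t, s ≤ t → U s t (κ s) = κ t) :
    IsEntranceLaw U μ (fun t => (μinf t).map (· + κ t)) := by
  refine ⟨fun t => Measure.isProbabilityMeasure_map (by fun_prop), fun s t hst B hB => ?_⟩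
  have := hμprob s t hst
  have hν : (μinf t).map (· + κ t) = ((μinf s).map (· + κ s)).map (U s t) ∗ μ s t := by
    rw [hconv s t hst, Measure.map_add_const_conv, Measure.map_map (by fun_prop) (by fun_prop),
      Measure.map_map (by fun_prop) (by fun_prop)]
    congr 2
    ext x
    simp only [Function.comp_apply, map_add, hκ s t hst]
  dsimp only
  rw [hν, Measure.map_conv_apply (U s t).measurable _ _ hB]

theorem stmt7_general
    {H : Type*} [NormedAddCommGroup H] [InnerProductSpace ℝ H]
    [TopologicalSpace.SeparableSpace H] [MeasurableSpace H] [BorelSpace H]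
    (U : ℝ → ℝ → H →L[ℝ] H)
    (μinf : ℝ → Measure H) (μ : ℝ → ℝ → Measure H)
    (hμinf_prob : ∀ t : ℝ, IsProbabilityMeasure (μinf t))
    (hμprob : ∀ s t : ℝ, s ≤ t → IsProbabilityMeasure (μ s t))
    (hconv : ∀ s t : ℝ, s ≤ t →
      μinf t = Measure.conv ((μinf s).map (U s t)) (μ s t))
    (κ : ℝ → H) (hκ : ∀ s t : ℝ, s ≤ t → U s t (κ s) = κ t) :
    IsEntranceLaw U μ (fun t => (μinf t).map (fun y => y + κ t)) ∧
      ∀ (t : ℝ) (a : H),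
        charFun' ((μinf t).map (fun y => y + κ t)) a
          = Complex.exp ((⟪a, κ t⟫ : ℂ) * Complex.I) * charFun' (μinf t) a :=
  ⟨isEntranceLaw_map_add_const U μinf μ hμinf_prob hμprob hconv κ hκ,
    fun t a => charFun'_map_add_const (μinf t) (κ t) a⟩

theorem stmt7
    {H : Type*} [NormedAddCommGroup H] [InnerProductSpace ℝ H] [CompleteSpace H]
    [TopologicalSpace.SeparableSpace H] [MeasurableSpace H] [BorelSpace H]
    (U : ℝ → ℝ → H →L[ℝ] H)
    (hU_id : ∀ t : ℝ, U t t = ContinuousLinearMap.id ℝ H)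
    (hU_comp : ∀ s r t : ℝ, s ≤ r → r ≤ t → (U r t).comp (U s r) = U s t)
    (μinf : ℝ → Measure H) (μ : ℝ → ℝ → Measure H)
    (hμinf_prob : ∀ t : ℝ, IsProbabilityMeasure (μinf t))
    (hμprob : ∀ s t : ℝ, s ≤ t → IsProbabilityMeasure (μ s t))
    (hconv : ∀ s t : ℝ, s ≤ t →
      μinf t = Measure.conv ((μinf s).map (U s t)) (μ s t))
    (κ : ℝ → H) (hκ : ∀ s t : ℝ, s ≤ t → U s t (κ s) = κ t) :
    IsEntranceLaw U μ (fun t => (μinf t).map (fun y => y + κ t)) ∧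
      ∀ (t : ℝ) (a : H),
        charFun' ((μinf t).map (fun y => y + κ t)) a
          = Complex.exp ((⟪a, κ t⟫ : ℂ) * Complex.I) * charFun' (μinf t) a :=
  stmt7_general U μinf μ hμinf_prob hμprob hconv κ hκ
end

section
/- Let (x_n)_{n∈ℕ} be a sequence in H and μ a probability measure on H such that for every a ∈ H, the limit lim_{n→∞} exp(i⟨a,x_n⟩) exists and equals charFun μ (a). Then there exists x ∈ H such that ⟨a,x_n⟩ → ⟨a,x⟩ for every a ∈ H (i.e. x_n converges weakly to x), and μ is the Dirac measure δ_x. -/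
/-!
For each direction `a`, the Dirac measures at `⟪a, x n⟫ ∈ ℝ` have characteristic functions
`t ↦ exp (i t ⟪a, x n⟫)` converging to `t ↦ charFun μ (t • a)`, which is continuous; by Lévy's
tightness criterion the scalars `⟪a, x n⟫` stay in a compact set, and any two cluster points
`c, c'` satisfy `charFun δ_c = charFun δ_c'`, hence coincide. So `⟪a, x n⟫` converges for every `a`;
by Banach–Steinhaus and Riesz the limit is `⟪a, ξ⟫`, and then `charFun μ = charFun δ_ξ`.
-/

open MeasureTheory Complex Filter
open scoped RealInnerProductSpace Topology

noncomputable def charFun_H {H : Type*} [NormedAddCommGroup H] [InnerProductSpace ℝ H]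
    [MeasurableSpace H] (μ : Measure H) (a : H) : ℂ :=
  ∫ x, Complex.exp ((⟪a, x⟫ : ℂ) * Complex.I) ∂μ

lemma charFun_H_eq_charFun {H : Type*} [NormedAddCommGroup H] [InnerProductSpace ℝ H]
    [MeasurableSpace H] (μ : Measure H) : charFun_H μ = charFun μ := by
  ext a
  simp only [charFun_H, charFun_apply, real_inner_comm]

lemma exists_isCompact_forall_mem_of_isTightMeasureSet_dirac {X ι : Type*} [TopologicalSpace X]
    [MeasurableSpace X] {s : ι → X}
    (hs : IsTightMeasureSet (Set.range fun i => Measure.dirac (s i))) :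
    ∃ K, IsCompact K ∧ ∀ i, s i ∈ K := by
  obtain ⟨K, hK, hle⟩ :=
    isTightMeasureSet_iff_exists_isCompact_measure_compl_le.mp hs (1 / 2) (by norm_num)
  refine ⟨K, hK, fun i => by_contra fun hi => ?_⟩
  have := hle _ ⟨i, rfl⟩
  rw [Measure.dirac_apply_of_mem (Set.mem_compl hi)] at this
  norm_num at this

section FiniteDimensional

variable {E : Type*} [NormedAddCommGroup E] [InnerProductSpace ℝ E] [FiniteDimensional ℝ E]
  [MeasurableSpace E] [BorelSpace E]

theorem exists_tendsto_of_tendsto_charFun_dirac {s : ℕ → E} {f : E → ℂ} (hf : ContinuousAt f 0)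
    (h : ∀ t, Tendsto (fun n => charFun (Measure.dirac (s n)) t) atTop (𝓝 (f t))) :
    ∃ c, Tendsto s atTop (𝓝 c) := by
  obtain ⟨K, hK, hsK⟩ := exists_isCompact_forall_mem_of_isTightMeasureSet_dirac
    (isTightMeasureSet_of_tendsto_charFun hf h)
  have hcluster : ∀ c, MapClusterPt c atTop s → charFun (Measure.dirac c) = f := by
    intro c hc
    funext t
    have hcont : Continuous fun y : E => charFun (Measure.dirac y) t := by
      simp only [charFun_dirac]; fun_prop
    exact eq_of_nhds_neBot (ClusterPt.mono (hc.tendsto_comp (hcont.tendsto c)) (h t))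
  obtain ⟨c, -, hc⟩ :=
    hK.exists_mapClusterPt_of_frequently (Frequently.of_forall (f := atTop) hsK)
  refine ⟨c, hK.tendsto_nhds_of_unique_mapClusterPt (.of_forall hsK) fun c' _ hc' => ?_⟩
  exact injective_dirac (Measure.ext_of_charFun ((hcluster c' hc').trans (hcluster c hc).symm))

end FiniteDimensional

theorem exists_forall_tendsto_inner_of_forall_exists_tendsto {H : Type*} [NormedAddCommGroup H]
    [InnerProductSpace ℝ H] [CompleteSpace H] {x : ℕ → H}
    (h : ∀ a, ∃ c, Tendsto (fun n => ⟪a, x n⟫) atTop (𝓝 c)) :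
    ∃ ξ, ∀ a, Tendsto (fun n => ⟪a, x n⟫) atTop (𝓝 ⟪a, ξ⟫) := by
  choose c hc using h
  have hlim : Tendsto (fun n a => innerSL ℝ (x n) a) atTop (𝓝 c) :=
    tendsto_pi_nhds.mpr fun a => by simpa only [innerSL_apply_apply, real_inner_comm] using hc a
  refine ⟨(InnerProductSpace.toDual ℝ H).symm (continuousLinearMapOfTendsto _ hlim), fun a => ?_⟩
  rw [real_inner_comm, InnerProductSpace.toDual_symm_apply]
  exact hc a

theorem stmt8
    {H : Type*} [NormedAddCommGroup H] [InnerProductSpace ℝ H] [CompleteSpace H]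
    [TopologicalSpace.SeparableSpace H] [MeasurableSpace H] [BorelSpace H]
    (x : ℕ → H) (μ : Measure H) [IsProbabilityMeasure μ]
    (h : ∀ a : H,
      Tendsto (fun n => Complex.exp ((⟪a, x n⟫ : ℂ) * Complex.I)) atTop (𝓝 (charFun_H μ a))) :
    ∃ ξ : H, (∀ a : H, Tendsto (fun n => ⟪a, x n⟫) atTop (𝓝 ⟪a, ξ⟫)) ∧
      μ = Measure.dirac ξ := by
  rw [charFun_H_eq_charFun] at h
  have hline : ∀ a : H, ∃ c, Tendsto (fun n => ⟪a, x n⟫) atTop (𝓝 c) := by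
    intro a
    refine exists_tendsto_of_tendsto_charFun_dirac (f := fun t : ℝ => charFun μ (t • a))
      (continuous_charFun.comp (continuous_id.smul continuous_const)).continuousAt fun t => ?_
    simpa [real_inner_smul_left, mul_comm] using h (t • a)
  obtain ⟨ξ, hξ⟩ := exists_forall_tendsto_inner_of_forall_exists_tendsto hline
  refine ⟨ξ, hξ, Measure.ext_of_charFun (funext fun a => ?_)⟩
  rw [charFun_dirac, real_inner_comm]
  have hexp : Continuous fun r : ℝ => cexp (r * I) := by fun_prop
  exact tendsto_nhds_unique (h a) ((hexp.tendsto _).comp (hξ a))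
end

section
/- Let T > 0 and let (U_{s,t})_{s≤t} be an evolution family of bounded linear operators on H such that ‖U_{s,t}‖ ≤ c e^{−ω(t−s)} for some constants c, ω ∈ (0,∞) and all s ≤ t. Let (η_t)_{t∈ℝ} be a family of probability measures on H such that η_t is the pushforward of η_s under U_{s,t} for all s ≤ t, and η_{t+T} = η_t for all t ∈ ℝ. Then η_t = δ_0 (the Dirac measure at 0) for every t ∈ ℝ. Consequently, if (ν_t) and (μ_t) are families of probability measures with ν_t = η_t ∗ μ_t for all t, then ν_t = μ_t for all t. -/
/-!
Fix `t`. By periodicity `η t = η (t - nT)`, so `η t` is invariant under `U (t - nT) t`, whose norm is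
at most `c e^{-ωnT} → 0`. Hence `η t` is invariant under a sequence of maps converging pointwise
to `0`, and testing against bounded continuous functions (dominated convergence) forces
`η t = δ₀`. Convolution with `δ₀` is the identity.
-/

open MeasureTheory Filter Topology

namespace MeasureTheory.Measure

theorem eq_dirac_of_map_eq_self_of_tendsto {X ι : Type*} [TopologicalSpace X]
    [HasOuterApproxClosed X] [MeasurableSpace X] [BorelSpace X]
    {l : Filter ι} [l.IsCountablyGenerated] [l.NeBot]
    (μ : Measure X) [IsProbabilityMeasure μ] (f : ι → X → X) (x₀ : X)
    (hf : ∀ i, Measurable (f i)) (hμ : ∀ i, μ.map (f i) = μ)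
    (hlim : ∀ x, Tendsto (fun i => f i x) l (𝓝 x₀)) :
    μ = dirac x₀ := by
  refine ext_of_forall_integral_eq_of_IsFiniteMeasure fun g => ?_
  have hcomp : Tendsto (fun i => ∫ x, g (f i x) ∂μ) l (𝓝 (∫ _, g x₀ ∂μ)) :=
    tendsto_integral_filter_of_dominated_convergence (fun _ => ‖g‖)
      (Eventually.of_forall fun i => (g.continuous.measurable.comp (hf i)).aestronglyMeasurable)
      (Eventually.of_forall fun i => ae_of_all _ fun x => g.norm_coe_le_norm (f i x))
      (integrable_const _) (ae_of_all _ fun x => (g.continuous.tendsto x₀).comp (hlim x))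
  have hconst : (fun i => ∫ x, g (f i x) ∂μ) = fun _ => ∫ x, g x ∂μ := by
    funext i
    conv_rhs => rw [← hμ i]
    rw [integral_map (hf i).aemeasurable g.continuous.aestronglyMeasurable]
  rw [hconst, integral_const, probReal_univ, one_smul] at hcomp
  rw [tendsto_nhds_unique tendsto_const_nhds hcomp,
    integral_dirac' _ _ g.continuous.stronglyMeasurable]

end MeasureTheory.Measure

theorem tendsto_apply_zero_of_norm_le_exp {E : Type*} [SeminormedAddCommGroup E]
    [NormedSpace ℝ E] (L : ℕ → E →L[ℝ] E) (c a : ℝ) (ha : 0 < a)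
    (hL : ∀ n : ℕ, ‖L n‖ ≤ c * Real.exp (-a * n)) (x : E) :
    Tendsto (fun n => L n x) atTop (𝓝 0) := by
  have hexp : Tendsto (fun n : ℕ => c * Real.exp (-a * n) * ‖x‖) atTop (𝓝 0) := by
    have hlin : Tendsto (fun n : ℕ => -a * n) atTop atBot :=
      tendsto_natCast_atTop_atTop.const_mul_atTop_of_neg (neg_neg_of_pos ha)
    simpa using ((Real.tendsto_exp_atBot.comp hlin).const_mul c).mul_const ‖x‖
  exact squeeze_zero_norm (fun n => (L n).le_of_opNorm_le (hL n) x) hexp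

theorem stmt9_general
    {H : Type*} [NormedAddCommGroup H] [InnerProductSpace ℝ H]
    [TopologicalSpace.SeparableSpace H] [MeasurableSpace H] [BorelSpace H]
    (T : ℝ) (hT : 0 < T)
    (U : ℝ → ℝ → H →L[ℝ] H)
    (c ω : ℝ) (hω : 0 < ω)
    (hnorm : ∀ s t : ℝ, s ≤ t → ‖U s t‖ ≤ c * Real.exp (-ω * (t - s)))
    (η : ℝ → Measure H) (hηprob : ∀ t : ℝ, IsProbabilityMeasure (η t))
    (hmap : ∀ s t : ℝ, s ≤ t → η t = (η s).map (U s t))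
    (hper : ∀ t : ℝ, η (t + T) = η t) :
    (∀ t : ℝ, η t = Measure.dirac 0) ∧
      ∀ (ν μ' : ℝ → Measure H), (∀ t : ℝ, IsProbabilityMeasure (μ' t)) →
        (∀ t : ℝ, ν t = Measure.conv (η t) (μ' t)) → ∀ t : ℝ, ν t = μ' t := by
  have hdirac (t : ℝ) : η t = Measure.dirac 0 := by
    have hback (n : ℕ) : t - n * T ≤ t := sub_le_self t (by positivity)
    have hinv (n : ℕ) : (η t).map (U (t - n * T) t) = η t := by
      have h := hmap _ t (hback n)
      rwa [Function.Periodic.sub_nat_mul_eq hper n, eq_comm] at h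
    have hdecay (n : ℕ) : ‖U (t - n * T) t‖ ≤ c * Real.exp (-(ω * T) * n) := by
      convert hnorm _ t (hback n) using 3
      ring
    exact Measure.eq_dirac_of_map_eq_self_of_tendsto (η t) (fun n : ℕ => U (t - n * T) t) 0
      (fun n => (U (t - n * T) t).continuous.measurable) hinv
      (tendsto_apply_zero_of_norm_le_exp _ c (ω * T) (mul_pos hω hT) hdecay)
  refine ⟨hdirac, fun ν μ' _ hconv t => ?_⟩
  rw [hconv t, hdirac t, Measure.dirac_zero_conv]

theorem stmt9
    {H : Type*} [NormedAddCommGroup H] [InnerProductSpace ℝ H] [CompleteSpace H]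
    [TopologicalSpace.SeparableSpace H] [MeasurableSpace H] [BorelSpace H]
    (T : ℝ) (hT : 0 < T)
    (U : ℝ → ℝ → H →L[ℝ] H)
    (hU_id : ∀ t : ℝ, U t t = ContinuousLinearMap.id ℝ H)
    (hU_comp : ∀ s r t : ℝ, s ≤ r → r ≤ t → (U r t).comp (U s r) = U s t)
    (c ω : ℝ) (hc : 0 < c) (hω : 0 < ω)
    (hnorm : ∀ s t : ℝ, s ≤ t → ‖U s t‖ ≤ c * Real.exp (-ω * (t - s)))
    (η : ℝ → Measure H) (hηprob : ∀ t : ℝ, IsProbabilityMeasure (η t))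
    (hmap : ∀ s t : ℝ, s ≤ t → η t = (η s).map (U s t))
    (hper : ∀ t : ℝ, η (t + T) = η t) :
    (∀ t : ℝ, η t = Measure.dirac 0) ∧
      ∀ (ν μ' : ℝ → Measure H), (∀ t : ℝ, IsProbabilityMeasure (μ' t)) →
        (∀ t : ℝ, ν t = Measure.conv (η t) (μ' t)) → ∀ t : ℝ, ν t = μ' t :=
  stmt9_general T hT U c ω hω hnorm η hηprob hmap hper
end

section
/- Let M be a measure on H with ∫_{‖x‖≤1} ‖x‖² dM(x) < ∞ and ∫_{‖x‖>1} ‖x‖ dM(x) < ∞. Let t ∈ ℝ, C, ω ∈ (0,∞), a ∈ H, and let (T_r)_{r≤t} be a family of bounded linear operators on H such that r ↦ T_r a is measurable and ‖T_r‖ ≤ C e^{−ω(t−r)} for all r ≤ t. Then ∫_{−∞}^t ∫_{{x : |⟨T_r a, x⟩| > 1}} |⟨T_r a, x⟩| dM(x) dr ≤ (C²‖a‖²/(2ω)) ∫_{‖x‖≤1} ‖x‖² dM(x) + (C‖a‖/ω) ∫_{‖x‖>1} ‖x‖ dM(x). -/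
open MeasureTheory
open scoped RealInnerProductSpace ENNReal

lemma lint_exp_aux (b t : ℝ) (hb : 0 < b) :
    ∫⁻ r in Set.Iic t, ENNReal.ofReal (Real.exp (-(b * (t - r)))) = ENNReal.ofReal (1 / b) := by
  have hmp : MeasurePreserving (fun x : ℝ => t - x) volume volume :=
    Measure.measurePreserving_sub_left volume t
  have hemb : MeasurableEmbedding (fun x : ℝ => t - x) :=
    (MeasurableEquiv.ofInvolutive (fun x : ℝ => t - x) (fun x => by simp) (by fun_prop)).measurableEmbedding
  have key := hmp.setLIntegral_comp_emb hemb
      (fun u => ENNReal.ofReal (Real.exp (-(b * u)))) (Set.Iic t)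
  have himg : (fun x : ℝ => t - x) '' Set.Iic t = Set.Ici 0 := by
    ext y
    constructor
    · rintro ⟨x, hx, rfl⟩; simpa using hx
    · intro hy; exact ⟨t - y, by simpa using hy, by ring⟩
  rw [himg] at key
  rw [key, setLIntegral_congr (Ioi_ae_eq_Ici (a := (0:ℝ))).symm]
  have hint : IntegrableOn (fun u : ℝ => Real.exp (-(b * u))) (Set.Ioi 0) := by
    simpa [neg_mul] using exp_neg_integrableOn_Ioi 0 hb
  rw [← ofReal_integral_eq_lintegral_ofReal hint
      (Filter.Eventually.of_forall fun x => (Real.exp_pos _).le)]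
  congr 1
  have := integral_comp_mul_left_Ioi (fun x : ℝ => Real.exp (-x)) 0 hb
  simp only [mul_zero, smul_eq_mul, integral_exp_neg_Ioi_zero] at this
  simpa [one_div] using this

theorem stmt13
    {H : Type*} [NormedAddCommGroup H] [InnerProductSpace ℝ H] [CompleteSpace H]
    [TopologicalSpace.SeparableSpace H] [MeasurableSpace H] [BorelSpace H]
    (M : Measure H)
    (h1 : ∫⁻ x in {x : H | ‖x‖ ≤ 1}, ENNReal.ofReal (‖x‖ ^ 2) ∂M < ∞)
    (h2 : ∫⁻ x in {x : H | 1 < ‖x‖}, ENNReal.ofReal ‖x‖ ∂M < ∞)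
    (t C ω : ℝ) (hC : 0 < C) (hω : 0 < ω) (a : H)
    (T : ℝ → H →L[ℝ] H) (hmeas : Measurable fun r => T r a)
    (hT : ∀ r : ℝ, r ≤ t → ‖T r‖ ≤ C * Real.exp (-ω * (t - r))) :
    ∫⁻ r in Set.Iic t,
        ∫⁻ x in {x : H | 1 < |⟪T r a, x⟫|}, ENNReal.ofReal |⟪T r a, x⟫| ∂M
      ≤ ENNReal.ofReal (C ^ 2 * ‖a‖ ^ 2 / (2 * ω)) *
          ∫⁻ x in {x : H | ‖x‖ ≤ 1}, ENNReal.ofReal (‖x‖ ^ 2) ∂M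
        + ENNReal.ofReal (C * ‖a‖ / ω) *
          ∫⁻ x in {x : H | 1 < ‖x‖}, ENNReal.ofReal ‖x‖ ∂M := by
  set I1 := ∫⁻ x in {x : H | ‖x‖ ≤ 1}, ENNReal.ofReal (‖x‖ ^ 2) ∂M with hI1
  set I2 := ∫⁻ x in {x : H | 1 < ‖x‖}, ENNReal.ofReal ‖x‖ ∂M with hI2
  have hg1 : Measurable fun x : H => ENNReal.ofReal (‖x‖ ^ 2) := by fun_prop
  have hg2 : Measurable fun x : H => ENNReal.ofReal ‖x‖ := by fun_prop
  -- inner bound for a fixed vector v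
  have inner_bound : ∀ v : H,
      ∫⁻ x in {x : H | 1 < |⟪v, x⟫|}, ENNReal.ofReal |⟪v, x⟫| ∂M
        ≤ ENNReal.ofReal (‖v‖ ^ 2) * I1 + ENNReal.ofReal ‖v‖ * I2 := by
    intro v
    have hsub : {x : H | 1 < |⟪v, x⟫|} ⊆
        ({x : H | 1 < |⟪v, x⟫|} ∩ {x : H | ‖x‖ ≤ 1}) ∪ {x : H | 1 < ‖x‖} := by
      intro x hx
      by_cases h : ‖x‖ ≤ 1
      · exact Or.inl ⟨hx, h⟩
      · exact Or.inr (lt_of_not_ge h)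
    calc ∫⁻ x in {x : H | 1 < |⟪v, x⟫|}, ENNReal.ofReal |⟪v, x⟫| ∂M
        ≤ ∫⁻ x in ({x : H | 1 < |⟪v, x⟫|} ∩ {x : H | ‖x‖ ≤ 1}) ∪ {x : H | 1 < ‖x‖},
            ENNReal.ofReal |⟪v, x⟫| ∂M := lintegral_mono_set hsub
      _ ≤ (∫⁻ x in {x : H | 1 < |⟪v, x⟫|} ∩ {x : H | ‖x‖ ≤ 1}, ENNReal.ofReal |⟪v, x⟫| ∂M)
            + ∫⁻ x in {x : H | 1 < ‖x‖}, ENNReal.ofReal |⟪v, x⟫| ∂M := lintegral_union_le _ _ _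
      _ ≤ ENNReal.ofReal (‖v‖ ^ 2) * I1 + ENNReal.ofReal ‖v‖ * I2 := by
          gcongr
          · calc ∫⁻ x in {x : H | 1 < |⟪v, x⟫|} ∩ {x : H | ‖x‖ ≤ 1}, ENNReal.ofReal |⟪v, x⟫| ∂M
                ≤ ∫⁻ x in {x : H | 1 < |⟪v, x⟫|} ∩ {x : H | ‖x‖ ≤ 1},
                    ENNReal.ofReal (‖v‖ ^ 2) * ENNReal.ofReal (‖x‖ ^ 2) ∂M := by
                  refine setLIntegral_mono (by fun_prop) fun x hx => ?_
                  rw [← ENNReal.ofReal_mul (by positivity)]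
                  refine ENNReal.ofReal_le_ofReal ?_
                  have h1x : (1:ℝ) < |⟪v, x⟫| := hx.1
                  have hcs : |⟪v, x⟫| ≤ ‖v‖ * ‖x‖ := abs_real_inner_le_norm v x
                  nlinarith [abs_nonneg (⟪v, x⟫), norm_nonneg v, norm_nonneg x]
              _ ≤ ∫⁻ x in {x : H | ‖x‖ ≤ 1},
                    ENNReal.ofReal (‖v‖ ^ 2) * ENNReal.ofReal (‖x‖ ^ 2) ∂M :=
                  lintegral_mono_set Set.inter_subset_right
              _ = ENNReal.ofReal (‖v‖ ^ 2) * I1 := by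
                  rw [hI1, lintegral_const_mul' _ _ ENNReal.ofReal_ne_top]
          · calc ∫⁻ x in {x : H | 1 < ‖x‖}, ENNReal.ofReal |⟪v, x⟫| ∂M
                ≤ ∫⁻ x in {x : H | 1 < ‖x‖},
                    ENNReal.ofReal ‖v‖ * ENNReal.ofReal ‖x‖ ∂M := by
                  refine setLIntegral_mono (by fun_prop) fun x hx => ?_
                  rw [← ENNReal.ofReal_mul (norm_nonneg v)]
                  exact ENNReal.ofReal_le_ofReal (abs_real_inner_le_norm v x)
              _ = ENNReal.ofReal ‖v‖ * I2 := by
                  rw [hI2, lintegral_const_mul' _ _ ENNReal.ofReal_ne_top]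
  have hm1 : Measurable fun r : ℝ => ENNReal.ofReal (‖T r a‖ ^ 2) := by fun_prop
  have hm2 : Measurable fun r : ℝ => ENNReal.ofReal ‖T r a‖ := by fun_prop
  calc ∫⁻ r in Set.Iic t,
          ∫⁻ x in {x : H | 1 < |⟪T r a, x⟫|}, ENNReal.ofReal |⟪T r a, x⟫| ∂M
      ≤ ∫⁻ r in Set.Iic t,
          (ENNReal.ofReal (‖T r a‖ ^ 2) * I1 + ENNReal.ofReal ‖T r a‖ * I2) :=
        lintegral_mono fun r => inner_bound (T r a)
    _ = (∫⁻ r in Set.Iic t, ENNReal.ofReal (‖T r a‖ ^ 2)) * I1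
          + (∫⁻ r in Set.Iic t, ENNReal.ofReal ‖T r a‖) * I2 := by
        rw [lintegral_add_left (hm1.mul_const _), lintegral_mul_const _ hm1,
          lintegral_mul_const _ hm2]
    _ ≤ ENNReal.ofReal (C ^ 2 * ‖a‖ ^ 2 / (2 * ω)) * I1
          + ENNReal.ofReal (C * ‖a‖ / ω) * I2 := by
        gcongr
        · calc ∫⁻ r in Set.Iic t, ENNReal.ofReal (‖T r a‖ ^ 2)
              ≤ ∫⁻ r in Set.Iic t,
                  ENNReal.ofReal (C ^ 2 * ‖a‖ ^ 2)
                    * ENNReal.ofReal (Real.exp (-(2 * ω * (t - r)))) := by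
                refine setLIntegral_mono (by fun_prop) fun r hr => ?_
                rw [← ENNReal.ofReal_mul (by positivity)]
                refine ENNReal.ofReal_le_ofReal ?_
                have hTa : ‖T r a‖ ≤ (C * Real.exp (-ω * (t - r))) * ‖a‖ :=
                  le_trans ((T r).le_opNorm a)
                    (mul_le_mul_of_nonneg_right (hT r hr) (norm_nonneg a))
                have he : Real.exp (-ω * (t - r)) * Real.exp (-ω * (t - r))
                    = Real.exp (-(2 * ω * (t - r))) := by
                  rw [← Real.exp_add]; ring_nf
                have hsq := mul_self_le_mul_self (norm_nonneg (T r a)) hTa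
                calc ‖(T r) a‖ ^ 2 = ‖(T r) a‖ * ‖(T r) a‖ := sq ‖(T r) a‖
                  _ ≤ C * Real.exp (-ω * (t - r)) * ‖a‖
                        * (C * Real.exp (-ω * (t - r)) * ‖a‖) := hsq
                  _ = C ^ 2 * ‖a‖ ^ 2
                        * (Real.exp (-ω * (t - r)) * Real.exp (-ω * (t - r))) := by ring
                  _ = C ^ 2 * ‖a‖ ^ 2 * Real.exp (-(2 * ω * (t - r))) := by rw [he]
            _ = ENNReal.ofReal (C ^ 2 * ‖a‖ ^ 2) * ENNReal.ofReal (1 / (2 * ω)) := by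
                rw [lintegral_const_mul' _ _ ENNReal.ofReal_ne_top,
                  lint_exp_aux (2 * ω) t (by positivity)]
            _ = ENNReal.ofReal (C ^ 2 * ‖a‖ ^ 2 / (2 * ω)) := by
                rw [← ENNReal.ofReal_mul (by positivity), mul_one_div]
        · calc ∫⁻ r in Set.Iic t, ENNReal.ofReal ‖T r a‖
              ≤ ∫⁻ r in Set.Iic t,
                  ENNReal.ofReal (C * ‖a‖)
                    * ENNReal.ofReal (Real.exp (-(ω * (t - r)))) := by
                refine setLIntegral_mono (by fun_prop) fun r hr => ?_
                rw [← ENNReal.ofReal_mul (by positivity)]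
                refine ENNReal.ofReal_le_ofReal ?_
                have hTa : ‖T r a‖ ≤ (C * Real.exp (-ω * (t - r))) * ‖a‖ :=
                  le_trans ((T r).le_opNorm a)
                    (mul_le_mul_of_nonneg_right (hT r hr) (norm_nonneg a))
                rw [neg_mul] at hTa
                nlinarith [norm_nonneg a, Real.exp_pos (-(ω * (t - r)))]
            _ = ENNReal.ofReal (C * ‖a‖) * ENNReal.ofReal (1 / ω) := by
                rw [lintegral_const_mul' _ _ ENNReal.ofReal_ne_top,
                  lint_exp_aux ω t hω]
            _ = ENNReal.ofReal (C * ‖a‖ / ω) := by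
                rw [← ENNReal.ofReal_mul (by positivity), mul_one_div]
end
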